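/- The product of measures on σ-rings defined by extending the Halmos product of σ-finite components by ∞ off the σ-finite sets is associative: for measure spaces (S_i, 𝔖_i, μ_i), i=1,2,3, one has (μ₁⊗μ₂)⊗μ₃ = μ₁⊗(μ₂⊗μ₃), under the natural identification (S₁×S₂)×S₃ ≅ S₁×(S₂×S₃). -/

import Mathlib

open Set ENNReal

/-- A family of sets is a σ-ring if it contains `∅` and is closed under
set differences and countable unions. -/
def IsSigmaRing {α : Type*} (C : Set (Set α)) : Prop :=
  ∅ ∈ C ∧ (∀ A B : Set α, A ∈ C → B ∈ C → A \ B ∈ C) ∧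
    ∀ f : ℕ → Set α, (∀ n, f n ∈ C) → (⋃ n, f n) ∈ C

/-- The σ-ring generated by a family of sets. -/
def genSR {α : Type*} (D : Set (Set α)) : Set (Set α) :=
  ⋂₀ {C | IsSigmaRing C ∧ D ⊆ C}

/-- A measure on a σ-ring: countably additive, vanishing on `∅`. -/
def IsMeasure {α : Type*} (C : Set (Set α)) (μ : Set α → ℝ≥0∞) : Prop :=
  μ ∅ = 0 ∧ ∀ f : ℕ → Set α, (∀ n, f n ∈ C) →
    Pairwise (Function.onFun Disjoint f) → μ (⋃ n, f n) = ∑' n, μ (f n)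

/-- The family of μ-σ-finite sets: countable unions of sets of finite measure. -/
def sigmaFin {α : Type*} (C : Set (Set α)) (μ : Set α → ℝ≥0∞) : Set (Set α) :=
  {A | ∃ g : ℕ → Set α, (∀ n, g n ∈ C ∧ μ (g n) < ⊤) ∧ A = ⋃ n, g n}

/-- Restriction of a family of sets to a set `S`. -/
def restrictFam {α : Type*} (D : Set (Set α)) (S : Set α) : Set (Set α) :=
  (fun A => A ∩ S) '' D

/-- The product σ-ring, generated by measurable rectangles. -/
def prodSR {α β : Type*} (S : Set (Set α)) (T : Set (Set β)) : Set (Set (α × β)) :=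
  genSR {R | ∃ A ∈ S, ∃ B ∈ T, R = A ×ˢ B}

/-- The σ-algebra generated by a family of sets. -/
def genSA {α : Type*} (D : Set (Set α)) : MeasurableSpace α :=
  MeasurableSpace.generateFrom D

/-- The (extended) Lebesgue integral of a nonnegative function with respect to a
measure on a σ-ring, as the supremum of integrals of simple functions below it. -/
noncomputable def lintSR {α : Type*} (C : Set (Set α)) (μ : Set α → ℝ≥0∞)
    (f : α → ℝ≥0∞) : ℝ≥0∞ :=
  ⨆ (n : ℕ) (c : Fin n → ℝ≥0∞) (A : Fin n → Set α) (_ : ∀ i, A i ∈ C)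
    (_ : ∀ x, (∑ i, (A i).indicator (fun _ => c i) x) ≤ f x),
    ∑ i, c i * μ (A i)

/-- The positive part of an extended real, as an `ℝ≥0∞`. -/
noncomputable def epos (x : EReal) : ℝ≥0∞ := (x ⊔ 0).abs

/-- Measurability of an extended-real function with respect to a σ-ring:
measurable for the generated σ-algebra, with support in the σ-ring. -/
def SRMeasurableE {α : Type*} (C : Set (Set α)) (f : α → EReal) : Prop :=
  @Measurable α EReal (genSA C) _ f ∧ {x | f x ≠ 0} ∈ C

/-- The Lebesgue integral of an extended-real function w.r.t. a measure on a σ-ring. -/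
noncomputable def integralE {α : Type*} (C : Set (Set α)) (μ : Set α → ℝ≥0∞)
    (f : α → EReal) : EReal :=
  ((lintSR C μ fun x => epos (f x) : ℝ≥0∞) : EReal) -
    ((lintSR C μ fun x => epos (-f x) : ℝ≥0∞) : EReal)

/-- Integrability of an extended-real function w.r.t. a measure on a σ-ring. -/
def IntegrableE {α : Type*} (C : Set (Set α)) (μ : Set α → ℝ≥0∞)
    (f : α → EReal) : Prop :=
  SRMeasurableE C f ∧ lintSR C μ (fun x => (f x).abs) < ⊤

/-- `lam` is the product of the measures `μ` and `ν` on σ-rings `S`, `T`: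
the unique measure on the product σ-ring whose σ-finite component is the Halmos
product of the σ-finite components. -/
def IsProdMeasure {α β : Type*} (S : Set (Set α)) (T : Set (Set β))
    (μ : Set α → ℝ≥0∞) (ν : Set β → ℝ≥0∞) (lam : Set (α × β) → ℝ≥0∞) : Prop :=
  IsMeasure (prodSR S T) lam ∧
  (∀ A ∈ S, ∀ B ∈ T, μ A < ⊤ → ν B < ⊤ → lam (A ×ˢ B) = μ A * ν B) ∧
  sigmaFin (prodSR S T) lam =
    genSR {R | ∃ A ∈ S, ∃ B ∈ T, μ A < ⊤ ∧ ν B < ⊤ ∧ R = A ×ˢ B}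

/-!
A measure `λ'` on `𝔖 ⊗ 𝔗` that satisfies `λ'(A × B) = μ A * ν B` on rectangles of finite measure,
and whose sets of finite measure lie in the σ-ring generated by those rectangles, equals `μ ⊗ ν`:
on that σ-ring (the σ-finite sets of `μ ⊗ ν`) by the π-λ uniqueness argument, and off it both are
`∞`. Transported through the associator, `μ₁ ⊗ (μ₂ ⊗ μ₃)` has these two properties relative to
`(μ₁ ⊗ μ₂) ⊗ μ₃`. The rectangle formula on `R × u` holds for `R = A × B` by the rectangle formulas
of the two-factor products, and then for every `R` of finite `μ₁ ⊗ μ₂`-measure by the same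
uniqueness argument in `R`; and a set of finite `μ₁ ⊗ (μ₂ ⊗ μ₃)`-measure is generated by sets
`A × (B × w)` with finite factors.
-/

section SigmaRing
variable {α : Type*}

theorem isSigmaRing_genSR (D : Set (Set α)) : IsSigmaRing (genSR D) :=
  ⟨fun _ hC => hC.1.1, fun A B hA hB C hC => hC.1.2.1 A B (hA C hC) (hB C hC),
    fun f hf C hC => hC.1.2.2 f fun n => hf n C hC⟩

theorem subset_genSR (D : Set (Set α)) : D ⊆ genSR D :=
  fun _ hX _ hC => hC.2 hX

theorem genSR_subset {D C : Set (Set α)} (hC : IsSigmaRing C) (h : D ⊆ C) :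
    genSR D ⊆ C := fun _ hX => hX C ⟨hC, h⟩

namespace IsSigmaRing
variable {C : Set (Set α)}

theorem empty_mem (hC : IsSigmaRing C) : ∅ ∈ C := hC.1

theorem diff_mem (hC : IsSigmaRing C) {A B : Set α} (hA : A ∈ C) (hB : B ∈ C) :
    A \ B ∈ C := hC.2.1 A B hA hB

theorem iUnion_mem (hC : IsSigmaRing C) {f : ℕ → Set α} (hf : ∀ n, f n ∈ C) :
    (⋃ n, f n) ∈ C := hC.2.2 f hf

theorem inter_mem (hC : IsSigmaRing C) {A B : Set α} (hA : A ∈ C) (hB : B ∈ C) :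
    A ∩ B ∈ C := by
  rw [← Set.sdiff_sdiff_right_self]
  exact hC.diff_mem hA (hC.diff_mem hA hB)

end IsSigmaRing

/-- The σ-ring analogue of a Dynkin system. -/
def IsLambdaRing (C : Set (Set α)) : Prop :=
  ∅ ∈ C ∧ (∀ A B : Set α, A ∈ C → B ∈ C → B ⊆ A → A \ B ∈ C) ∧
    ∀ f : ℕ → Set α, (∀ n, f n ∈ C) → Pairwise (Function.onFun Disjoint f) →
      (⋃ n, f n) ∈ C

def genLR (D : Set (Set α)) : Set (Set α) := ⋂₀ {C | IsLambdaRing C ∧ D ⊆ C}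

theorem isLambdaRing_genLR (D : Set (Set α)) : IsLambdaRing (genLR D) :=
  ⟨fun _ hC => hC.1.1, fun A B hA hB hBA C hC => hC.1.2.1 A B (hA C hC) (hB C hC) hBA,
    fun f hf hpw C hC => hC.1.2.2 f (fun n => hf n C hC) hpw⟩

theorem subset_genLR (D : Set (Set α)) : D ⊆ genLR D :=
  fun _ hX _ hC => hC.2 hX

theorem genLR_subset {D C : Set (Set α)} (hC : IsLambdaRing C) (h : D ⊆ C) :
    genLR D ⊆ C := fun _ hX => hX C ⟨hC, h⟩

namespace IsLambdaRing
variable {L : Set (Set α)}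

theorem setOf_inter_mem (hL : IsLambdaRing L) (B : Set α) :
    IsLambdaRing {X | X ∩ B ∈ L} := by
  refine ⟨by simpa using hL.1, fun X Y hX hY hYX => ?_, fun f hf hpw => ?_⟩
  · rw [Set.mem_ofPred_eq, Set.inter_sdiff_distrib_right]
    exact hL.2.1 _ _ hX hY (Set.inter_subset_inter_left B hYX)
  · rw [Set.mem_ofPred_eq, Set.iUnion_inter]
    exact hL.2.2 _ hf fun i j hij =>
      (hpw hij).mono Set.inter_subset_left Set.inter_subset_left

theorem isSigmaRing_of_inter_mem (hL : IsLambdaRing L)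
    (hinter : ∀ A ∈ L, ∀ B ∈ L, A ∩ B ∈ L) : IsSigmaRing L := by
  have hdiff : ∀ A B, A ∈ L → B ∈ L → A \ B ∈ L := fun A B hA hB => by
    rw [← Set.sdiff_self_inter]
    exact hL.2.1 _ _ hA (hinter A hA B hB) Set.inter_subset_left
  refine ⟨hL.1, hdiff, fun f hf => ?_⟩
  rw [← iUnion_disjointed]
  exact hL.2.2 _ (fun n => disjointedRec (fun _ _ ht => hdiff _ _ ht (hf _)) (hf n))
    (disjoint_disjointed f)

end IsLambdaRing

theorem genLR_inter_mem {P : Set (Set α)} (hP : ∀ A ∈ P, ∀ B ∈ P, A ∩ B ∈ P) :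
    ∀ A ∈ genLR P, ∀ B ∈ genLR P, A ∩ B ∈ genLR P := by
  have hL := isLambdaRing_genLR P
  have hP_inter : ∀ Q ∈ P, ∀ A ∈ genLR P, A ∩ Q ∈ genLR P := fun Q hQ =>
    genLR_subset (hL.setOf_inter_mem Q) fun X hX => subset_genLR P (hP X hX Q hQ)
  intro A hA B hB
  refine genLR_subset (hL.setOf_inter_mem B) (fun Q hQ => ?_) hA
  rw [Set.mem_ofPred_eq, Set.inter_comm]
  exact hP_inter Q hQ B hB

/-- The π-λ theorem for σ-rings. -/
theorem genSR_subset_of_isLambdaRing {P D : Set (Set α)}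
    (hP : ∀ A ∈ P, ∀ B ∈ P, A ∩ B ∈ P) (hD : IsLambdaRing D) (hPD : P ⊆ D) :
    genSR P ⊆ D :=
  (genSR_subset ((isLambdaRing_genLR P).isSigmaRing_of_inter_mem (genLR_inter_mem hP))
    (subset_genLR P)).trans (genLR_subset hD hPD)

end SigmaRing

namespace IsMeasure
variable {α : Type*} {C : Set (Set α)} {μ : Set α → ℝ≥0∞}

theorem union (hC : IsSigmaRing C) (hμ : IsMeasure C μ) {A B : Set α} (hA : A ∈ C)
    (hB : B ∈ C) (hd : Disjoint A B) : μ (A ∪ B) = μ A + μ B := by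
  let f : ℕ → Set α := fun n => if n = 0 then A else if n = 1 then B else ∅
  have hf : ∀ n, f n ∈ C := fun n => by
    simp only [f]; split_ifs <;> first | assumption | exact hC.empty_mem
  have hpw : Pairwise (Function.onFun Disjoint f) := fun i j hij => by
    simp only [Function.onFun, f]; split_ifs <;> simp_all [hd.symm]
  have hU : (⋃ n, f n) = A ∪ B := by
    ext x; simp only [Set.mem_iUnion, Set.mem_union, f]
    refine ⟨fun ⟨n, hn⟩ => ?_, fun h => h.elim (fun h => ⟨0, by simpa⟩) fun h => ⟨1, by simpa⟩⟩
    split_ifs at hn <;> simp_all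
  rw [← hU, hμ.2 f hf hpw, tsum_eq_sum (s := Finset.range 2)]
  · simp [f, Finset.sum_range_succ]
  · intro n hn
    simp only [Finset.mem_range, not_lt] at hn
    simp only [f, if_neg (by omega : n ≠ 0), if_neg (by omega : n ≠ 1), hμ.1]

theorem add_diff (hC : IsSigmaRing C) (hμ : IsMeasure C μ) {A B : Set α} (hA : A ∈ C)
    (hB : B ∈ C) (hAB : A ⊆ B) : μ A + μ (B \ A) = μ B := by
  rw [← hμ.union hC hA (hC.diff_mem hB hA) Set.disjoint_sdiff_right,
    Set.union_sdiff_cancel hAB]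

theorem mono (hC : IsSigmaRing C) (hμ : IsMeasure C μ) {A B : Set α} (hA : A ∈ C)
    (hB : B ∈ C) (hAB : A ⊆ B) : μ A ≤ μ B := by
  rw [← hμ.add_diff hC hA hB hAB]
  exact le_self_add

theorem mul_const (hμ : IsMeasure C μ) (c : ℝ≥0∞) : IsMeasure C fun A => μ A * c :=
  ⟨by simp [hμ.1], fun f hf hpw => by simp only [hμ.2 f hf hpw, ENNReal.tsum_mul_right]⟩

end IsMeasure

theorem mem_sigmaFin_of_lt_top {α : Type*} {C : Set (Set α)} {μ : Set α → ℝ≥0∞} {A : Set α}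
    (hA : A ∈ C) (hfin : μ A < ⊤) : A ∈ sigmaFin C μ :=
  ⟨fun _ => A, fun _ => ⟨hA, hfin⟩, (Set.iUnion_const A).symm⟩

section Uniqueness
variable {α : Type*} {C P : Set (Set α)} {lam lam' : Set α → ℝ≥0∞}

theorem exists_cover_of_mem_genSR (hP0 : ∅ ∈ P) {E : Set α} (hE : E ∈ genSR P) :
    ∃ r : ℕ → Set α, (∀ n, r n ∈ P) ∧ E ⊆ ⋃ n, r n := by
  refine genSR_subset (C := {E | ∃ r : ℕ → Set α, (∀ n, r n ∈ P) ∧ E ⊆ ⋃ n, r n})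
    ⟨⟨fun _ => ∅, fun _ => hP0, Set.empty_subset _⟩, ?_, ?_⟩
    (fun p hp => ⟨fun _ => p, fun _ => hp, Set.subset_iUnion (fun _ => p) 0⟩) hE
  · rintro A B ⟨r, hr, hAr⟩ _
    exact ⟨r, hr, Set.sdiff_subset.trans hAr⟩
  · intro f hf
    choose r hr hfr using hf
    refine ⟨fun k => r k.unpair.1 k.unpair.2, fun k => hr _ _, ?_⟩
    rw [Set.iUnion_unpair]
    exact Set.iUnion_mono hfr

theorem IsMeasure.inter_eq_of_mem_genSR (hC : IsSigmaRing C) (hl : IsMeasure C lam)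
    (hl' : IsMeasure C lam') (hPC : P ⊆ C) (hP : ∀ A ∈ P, ∀ B ∈ P, A ∩ B ∈ P)
    (heq : ∀ p ∈ P, lam p = lam' p) (hfin : ∀ p ∈ P, lam p < ⊤) {E : Set α}
    (hE : E ∈ genSR P) {p : Set α} (hp : p ∈ P) : lam (E ∩ p) = lam' (E ∩ p) := by
  refine (genSR_subset_of_isLambdaRing (D := {E | E ∈ C ∧ ∀ p ∈ P, lam (E ∩ p) = lam' (E ∩ p)})
    hP ⟨⟨hC.empty_mem, by simp [hl.1, hl'.1]⟩, ?_, ?_⟩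
    (fun q hq => ⟨hPC hq, fun p hp => heq _ (hP q hq p hp)⟩) hE).2 p hp
  · rintro A B ⟨hA, hAeq⟩ ⟨hB, hBeq⟩ hBA
    refine ⟨hC.diff_mem hA hB, fun p hp => ?_⟩
    have hAp := hC.inter_mem hA (hPC hp)
    have hBp := hC.inter_mem hB (hPC hp)
    have hsub : B ∩ p ⊆ A ∩ p := Set.inter_subset_inter_left p hBA
    have hBp_fin : lam (B ∩ p) ≠ ⊤ :=
      ((hl.mono hC hBp (hPC hp) Set.inter_subset_right).trans_lt (hfin p hp)).ne
    rw [Set.inter_sdiff_distrib_right]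
    refine (ENNReal.add_right_inj hBp_fin).1 ?_
    rw [hl.add_diff hC hBp hAp hsub, hBeq p hp, hl'.add_diff hC hBp hAp hsub, hAeq p hp]
  · intro f hf hpw
    refine ⟨hC.iUnion_mem fun n => (hf n).1, fun p hp => ?_⟩
    have hfp : ∀ n, f n ∩ p ∈ C := fun n => hC.inter_mem (hf n).1 (hPC hp)
    have hpw' : Pairwise (Function.onFun Disjoint fun n => f n ∩ p) := fun i j hij =>
      (hpw hij).mono Set.inter_subset_left Set.inter_subset_left
    rw [Set.iUnion_inter, hl.2 _ hfp hpw', hl'.2 _ hfp hpw']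
    exact tsum_congr fun n => (hf n).2 p hp

theorem IsMeasure.eq_on_genSR (hC : IsSigmaRing C) (hl : IsMeasure C lam)
    (hl' : IsMeasure C lam') (hPC : P ⊆ C) (hP0 : ∅ ∈ P) (hP : ∀ A ∈ P, ∀ B ∈ P, A ∩ B ∈ P)
    (heq : ∀ p ∈ P, lam p = lam' p) (hfin : ∀ p ∈ P, lam p < ⊤) :
    ∀ E ∈ genSR P, lam E = lam' E := by
  intro E hE
  obtain ⟨r, hrP, hEr⟩ := exists_cover_of_mem_genSR hP0 hE
  have hG := isSigmaRing_genSR P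
  have hd : ∀ n, E ∩ disjointed r n ∈ genSR P := fun n =>
    hG.inter_mem hE (disjointedRec (fun _ _ ht => hG.diff_mem ht (subset_genSR P (hrP _)))
      (subset_genSR P (hrP n)))
  have hdC : ∀ n, E ∩ disjointed r n ∈ C := fun n => genSR_subset hC hPC (hd n)
  have hpw : Pairwise (Function.onFun Disjoint fun n => E ∩ disjointed r n) := fun i j hij =>
    (disjoint_disjointed r hij).mono Set.inter_subset_right Set.inter_subset_right
  have hE_eq : E = ⋃ n, E ∩ disjointed r n := by
    rw [← Set.inter_iUnion, iUnion_disjointed, Set.inter_eq_self_of_subset_left hEr]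
  rw [hE_eq, hl.2 _ hdC hpw, hl'.2 _ hdC hpw]
  refine tsum_congr fun n => ?_
  -- `E ∩ disjointed r n` lies inside the generator `r n`
  rw [← Set.inter_eq_self_of_subset_left (Set.inter_subset_right.trans (disjointed_subset r n))]
  exact hl.inter_eq_of_mem_genSR hC hl' hPC hP heq hfin (hd n) (hrP n)

end Uniqueness

section Product
variable {α β : Type*} {S : Set (Set α)} {T : Set (Set β)} {μ : Set α → ℝ≥0∞}
  {ν : Set β → ℝ≥0∞} {lam : Set (α × β) → ℝ≥0∞}

def finRectangles (S : Set (Set α)) (T : Set (Set β)) (μ : Set α → ℝ≥0∞)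
    (ν : Set β → ℝ≥0∞) : Set (Set (α × β)) :=
  {R | ∃ A ∈ S, ∃ B ∈ T, μ A < ⊤ ∧ ν B < ⊤ ∧ R = A ×ˢ B}

theorem finRectangles_subset_prodSR : finRectangles S T μ ν ⊆ prodSR S T := by
  rintro _ ⟨A, hA, B, hB, -, -, rfl⟩
  exact subset_genSR _ ⟨A, hA, B, hB, rfl⟩

theorem empty_mem_finRectangles (hS : IsSigmaRing S) (hT : IsSigmaRing T)
    (hμ : IsMeasure S μ) (hν : IsMeasure T ν) : ∅ ∈ finRectangles S T μ ν :=
  ⟨∅, hS.empty_mem, ∅, hT.empty_mem, by simp [hμ.1], by simp [hν.1], Set.empty_prod.symm⟩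

theorem inter_mem_finRectangles (hS : IsSigmaRing S) (hT : IsSigmaRing T)
    (hμ : IsMeasure S μ) (hν : IsMeasure T ν) :
    ∀ R ∈ finRectangles S T μ ν, ∀ R' ∈ finRectangles S T μ ν,
      R ∩ R' ∈ finRectangles S T μ ν := by
  rintro _ ⟨A, hA, B, hB, hAf, hBf, rfl⟩ _ ⟨A', hA', B', hB', -, -, rfl⟩
  exact ⟨A ∩ A', hS.inter_mem hA hA', B ∩ B', hT.inter_mem hB hB',
    (hμ.mono hS (hS.inter_mem hA hA') hA Set.inter_subset_left).trans_lt hAf,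
    (hν.mono hT (hT.inter_mem hB hB') hB Set.inter_subset_left).trans_lt hBf,
    Set.prod_inter_prod⟩

namespace IsProdMeasure

theorem mem_genSR_of_lt_top (hlam : IsProdMeasure S T μ ν lam) {X : Set (α × β)}
    (hX : X ∈ prodSR S T) (hfin : lam X < ⊤) : X ∈ genSR (finRectangles S T μ ν) := by
  rw [finRectangles, ← hlam.2.2]
  exact mem_sigmaFin_of_lt_top hX hfin

theorem eq_of_isMeasure (hS : IsSigmaRing S) (hT : IsSigmaRing T) (hμ : IsMeasure S μ)
    (hν : IsMeasure T ν) (hlam : IsProdMeasure S T μ ν lam) {lam' : Set (α × β) → ℝ≥0∞}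
    (hlam' : IsMeasure (prodSR S T) lam')
    (hrect : ∀ A ∈ S, ∀ B ∈ T, μ A < ⊤ → ν B < ⊤ → lam' (A ×ˢ B) = μ A * ν B)
    (hfin : ∀ X ∈ prodSR S T, lam' X < ⊤ → X ∈ genSR (finRectangles S T μ ν)) :
    ∀ X ∈ prodSR S T, lam X = lam' X := by
  intro X hX
  by_cases hXσ : X ∈ genSR (finRectangles S T μ ν)
  · refine hlam.1.eq_on_genSR (isSigmaRing_genSR _) hlam' finRectangles_subset_prodSR
      (empty_mem_finRectangles hS hT hμ hν) (inter_mem_finRectangles hS hT hμ hν) ?_ ?_ X hXσ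
    · rintro _ ⟨A, hA, B, hB, hAf, hBf, rfl⟩
      rw [hlam.2.1 A hA B hB hAf hBf, hrect A hA B hB hAf hBf]
    · rintro _ ⟨A, hA, B, hB, hAf, hBf, rfl⟩
      rw [hlam.2.1 A hA B hB hAf hBf]
      exact ENNReal.mul_lt_top hAf hBf
  · rw [not_lt_top_iff.1 (mt (hlam.mem_genSR_of_lt_top hX) hXσ),
      not_lt_top_iff.1 (mt (hfin X hX) hXσ)]

end IsProdMeasure

end Product

section SigmaRingHom
variable {α β : Type*}

def IsSigmaRingHom (F : Set α → Set β) : Prop :=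
  (∀ A B, F (A \ B) = F A \ F B) ∧ ∀ f : ℕ → Set α, F (⋃ n, f n) = ⋃ n, F (f n)

namespace IsSigmaRingHom
variable {F : Set α → Set β}

theorem map_empty (hF : IsSigmaRingHom F) : F ∅ = ∅ := by
  simpa using hF.1 ∅ ∅

theorem disjoint (hF : IsSigmaRingHom F) {A B : Set α} (h : Disjoint A B) :
    Disjoint (F A) (F B) := by
  have hA := hF.1 A B
  rw [h.sdiff_eq_left] at hA
  rw [hA]
  exact disjoint_sdiff_left

theorem comp {γ : Type*} {G : Set γ → Set α} (hF : IsSigmaRingHom F) (hG : IsSigmaRingHom G) :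
    IsSigmaRingHom (F ∘ G) :=
  ⟨fun A B => by simp only [Function.comp_apply, hG.1, hF.1],
    fun f => by simp only [Function.comp_apply, hG.2, hF.2]⟩

theorem mem_of_mem_genSR (hF : IsSigmaRingHom F) {C : Set (Set β)} (hC : IsSigmaRing C)
    {D : Set (Set α)} (hD : ∀ A ∈ D, F A ∈ C) : ∀ A ∈ genSR D, F A ∈ C :=
  genSR_subset (C := {A | F A ∈ C})
    ⟨by simpa [Set.mem_ofPred_eq, hF.map_empty] using hC.empty_mem,
      fun A B hA hB => by simpa [Set.mem_ofPred_eq, hF.1] using hC.diff_mem hA hB,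
      fun f hf => by simpa [Set.mem_ofPred_eq, hF.2] using hC.iUnion_mem hf⟩ hD

theorem isMeasure_comp (hF : IsSigmaRingHom F) {C : Set (Set β)} {ν : Set β → ℝ≥0∞}
    (hν : IsMeasure C ν) {D : Set (Set α)} (hD : ∀ A ∈ D, F A ∈ C) :
    IsMeasure D fun A => ν (F A) :=
  ⟨by simp only [hF.map_empty, hν.1], fun f hf hpw => by
    simp only [hF.2]
    exact hν.2 _ (fun n => hD _ (hf n)) fun i j hij => hF.disjoint (hpw hij)⟩

end IsSigmaRingHom

theorem isSigmaRingHom_image {f : α → β} (hf : Function.Injective f) :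
    IsSigmaRingHom (f '' ·) :=
  ⟨fun A B => Set.image_sdiff hf A B, fun _ => Set.image_iUnion⟩

theorem isSigmaRingHom_prod_const {γ : Type*} (u : Set γ) :
    IsSigmaRingHom fun X : Set α => X ×ˢ u :=
  ⟨fun A B => by ext; simp; tauto, fun _ => Set.iUnion_prod_const⟩

theorem isSigmaRingHom_const_prod {γ : Type*} (A : Set γ) :
    IsSigmaRingHom fun X : Set α => A ×ˢ X :=
  ⟨fun X Y => by ext; simp; tauto, fun _ => Set.prod_iUnion⟩

end SigmaRingHom

section Associativity
variable {α β γ : Type*} {S₁ : Set (Set α)} {S₂ : Set (Set β)} {S₃ : Set (Set γ)}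
  {μ₁ : Set α → ℝ≥0∞} {μ₂ : Set β → ℝ≥0∞} {μ₃ : Set γ → ℝ≥0∞}
  {lam₁₂ : Set (α × β) → ℝ≥0∞} {lam₂₃ : Set (β × γ) → ℝ≥0∞}

theorem image_prodAssoc_mem_prodSR :
    ∀ X ∈ prodSR (prodSR S₁ S₂) S₃,
      Equiv.prodAssoc α β γ '' X ∈ prodSR S₁ (prodSR S₂ S₃) := by
  have he := isSigmaRingHom_image (Equiv.prodAssoc α β γ).injective
  refine he.mem_of_mem_genSR (isSigmaRing_genSR _) ?_
  rintro _ ⟨R, hR, u, hu, rfl⟩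
  refine (he.comp (isSigmaRingHom_prod_const u)).mem_of_mem_genSR (isSigmaRing_genSR _) ?_ R hR
  rintro _ ⟨A, hA, B, hB, rfl⟩
  exact subset_genSR _
    ⟨A, hA, B ×ˢ u, subset_genSR _ ⟨B, hB, u, hu, rfl⟩, Equiv.prod_assoc_image⟩

theorem symm_image_prodAssoc_mem_genSR_finRectangles
    (hlam₁₂ : IsProdMeasure S₁ S₂ μ₁ μ₂ lam₁₂) (hlam₂₃ : IsProdMeasure S₂ S₃ μ₂ μ₃ lam₂₃) :
    ∀ Z ∈ genSR (finRectangles S₁ (prodSR S₂ S₃) μ₁ lam₂₃),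
      (Equiv.prodAssoc α β γ).symm '' Z ∈ genSR (finRectangles (prodSR S₁ S₂) S₃ lam₁₂ μ₃) := by
  have he := isSigmaRingHom_image (Equiv.prodAssoc α β γ).symm.injective
  refine he.mem_of_mem_genSR (isSigmaRing_genSR _) ?_
  rintro _ ⟨A, hA, Q, hQ, hAf, hQf, rfl⟩
  refine (he.comp (isSigmaRingHom_const_prod A)).mem_of_mem_genSR (isSigmaRing_genSR _) ?_ Q
    (hlam₂₃.mem_genSR_of_lt_top hQ hQf)
  rintro _ ⟨B, hB, w, hw, hBf, hwf, rfl⟩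
  refine subset_genSR _ ⟨A ×ˢ B, subset_genSR _ ⟨A, hA, B, hB, rfl⟩, w, hw, ?_, hwf,
    Equiv.prod_assoc_symm_image⟩
  rw [hlam₁₂.2.1 A hA B hB hAf hBf]
  exact ENNReal.mul_lt_top hAf hBf

theorem measure_image_prodAssoc_prod (h₁ : IsSigmaRing S₁) (h₂ : IsSigmaRing S₂)
    (hμ₁ : IsMeasure S₁ μ₁) (hμ₂ : IsMeasure S₂ μ₂) (hlam₁₂ : IsProdMeasure S₁ S₂ μ₁ μ₂ lam₁₂)
    (hlam₂₃ : IsProdMeasure S₂ S₃ μ₂ μ₃ lam₂₃) {lamR : Set (α × (β × γ)) → ℝ≥0∞}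
    (hlamR : IsProdMeasure S₁ (prodSR S₂ S₃) μ₁ lam₂₃ lamR) {u : Set γ} (hu : u ∈ S₃)
    (huf : μ₃ u < ⊤) {R : Set (α × β)} (hR : R ∈ prodSR S₁ S₂) (hRf : lam₁₂ R < ⊤) :
    lamR (Equiv.prodAssoc α β γ '' R ×ˢ u) = lam₁₂ R * μ₃ u := by
  have hF := (isSigmaRingHom_image (Equiv.prodAssoc α β γ).injective).comp
    (isSigmaRingHom_prod_const u)
  have hmem : ∀ R ∈ prodSR S₁ S₂, Equiv.prodAssoc α β γ '' R ×ˢ u ∈ prodSR S₁ (prodSR S₂ S₃) :=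
    fun R hR => image_prodAssoc_mem_prodSR _ (subset_genSR _ ⟨R, hR, u, hu, rfl⟩)
  refine ((hlam₁₂.1.mul_const (μ₃ u)).eq_on_genSR (isSigmaRing_genSR _)
    (hF.isMeasure_comp hlamR.1 hmem) finRectangles_subset_prodSR
    (empty_mem_finRectangles h₁ h₂ hμ₁ hμ₂) (inter_mem_finRectangles h₁ h₂ hμ₁ hμ₂) ?_ ?_ R
    (hlam₁₂.mem_genSR_of_lt_top hR hRf)).symm
  · rintro _ ⟨A, hA, B, hB, hAf, hBf, rfl⟩
    have hBu : lam₂₃ (B ×ˢ u) = μ₂ B * μ₃ u := hlam₂₃.2.1 B hB u hu hBf huf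
    rw [Function.comp_apply, Equiv.prod_assoc_image,
      hlamR.2.1 A hA _ (subset_genSR _ ⟨B, hB, u, hu, rfl⟩) hAf
        (hBu ▸ ENNReal.mul_lt_top hBf huf),
      hBu, hlam₁₂.2.1 A hA B hB hAf hBf, mul_assoc]
  · rintro _ ⟨A, hA, B, hB, hAf, hBf, rfl⟩
    rw [hlam₁₂.2.1 A hA B hB hAf hBf]
    exact ENNReal.mul_lt_top (ENNReal.mul_lt_top hAf hBf) huf

end Associativity

/-- associativity of the product of arbitrary measures on
σ-rings, under the identification `(S₁ × S₂) × S₃ ≃ S₁ × (S₂ × S₃)`. -/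
theorem stmt_11 {α β γ : Type*}
    (S₁ : Set (Set α)) (S₂ : Set (Set β)) (S₃ : Set (Set γ))
    (μ₁ : Set α → ℝ≥0∞) (μ₂ : Set β → ℝ≥0∞) (μ₃ : Set γ → ℝ≥0∞)
    (h₁ : IsSigmaRing S₁) (h₂ : IsSigmaRing S₂) (h₃ : IsSigmaRing S₃)
    (hμ₁ : IsMeasure S₁ μ₁) (hμ₂ : IsMeasure S₂ μ₂) (hμ₃ : IsMeasure S₃ μ₃)
    (lam₁₂ : Set (α × β) → ℝ≥0∞) (hlam₁₂ : IsProdMeasure S₁ S₂ μ₁ μ₂ lam₁₂)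
    (lam₂₃ : Set (β × γ) → ℝ≥0∞) (hlam₂₃ : IsProdMeasure S₂ S₃ μ₂ μ₃ lam₂₃)
    (lamL : Set ((α × β) × γ) → ℝ≥0∞)
    (hlamL : IsProdMeasure (prodSR S₁ S₂) S₃ lam₁₂ μ₃ lamL)
    (lamR : Set (α × (β × γ)) → ℝ≥0∞)
    (hlamR : IsProdMeasure S₁ (prodSR S₂ S₃) μ₁ lam₂₃ lamR) :
    ∀ C ∈ prodSR (prodSR S₁ S₂) S₃,
      lamL C = lamR ((Equiv.prodAssoc α β γ) '' C) := by
  refine hlamL.eq_of_isMeasure (isSigmaRing_genSR _) h₃ hlam₁₂.1 hμ₃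
    ((isSigmaRingHom_image (Equiv.prodAssoc α β γ).injective).isMeasure_comp hlamR.1
      image_prodAssoc_mem_prodSR) ?_ ?_
  · intro R hR u hu hRf huf
    exact measure_image_prodAssoc_prod h₁ h₂ hμ₁ hμ₂ hlam₁₂ hlam₂₃ hlamR hu huf hR hRf
  · intro X hX hXf
    have := symm_image_prodAssoc_mem_genSR_finRectangles hlam₁₂ hlam₂₃ _
      (hlamR.mem_genSR_of_lt_top (image_prodAssoc_mem_prodSR X hX) hXf)
    rwa [Equiv.symm_image_image] at this
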